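/- Let X be a complex Banach space, let ℤ^{∞*} = ⊕_{n≥1} ℤ be the dual group of 𝕋^ℕ via the characters χ_J(θ) = ∏_n e^{i j_n θ_n}, let P be the reversed lexicographic order and P(ε) the order associated to ε ∈ {−1,1}^ℕ. Then for every n ≥ 1, finite sets K_k ⊆ ℤ^k \ ℤ^{k−1} (1 ≤ k ≤ n), and coefficients a_J ∈ X, one has T_P ∘ T_{P(ε)} (∑_{k=1}^n ∑_{J∈K_k} a_J χ_J) = − ∑_{k=1}^n ε_k (∑_{J∈K_k} a_J χ_J); equivalently, replacing ε by −ε, the composition of the two conjugate function operators realizes every martingale transform ∑_{k=1}^n ε_k (∑_{J∈K_k} a_J χ_J) of the trigonometric polynomial ∑_{k=1}^n ∑_{J∈K_k} a_J χ_J. -/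

import Mathlib

open Complex

instance : Fact (0 < 2 * Real.pi) := ⟨by positivity⟩

/-- `ℤ^{∞*} = ⊕_{n≥1} ℤ`, the dual group of `𝕋^ℕ` (the coordinate of Lean index `k : ℕ`
represents the paper's coordinate `j_{k+1}`). -/
abbrev Zinf := ℕ →₀ ℤ

/-- The infinite torus `𝕋^ℕ`, a countable product of circle groups. -/
abbrev TorusInf := ℕ → AddCircle (2 * Real.pi)

/-- `n(J)`: the largest `n ≥ 1` such that `j_n ≠ 0`, and `n(0) = 0`. -/
noncomputable def nIdx (J : Zinf) : ℕ := by
  classical exact if h : J.support.Nonempty then J.support.max' h + 1 else 0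

/-- `j_{n(J)}`: the last nonzero coordinate of `J` (and `0` if `J = 0`). -/
noncomputable def lastCoeff (J : Zinf) : ℤ := J (nIdx J - 1)

/-- The order `P(ε) = {J : ε_{n(J)} j_{n(J)} > 0} ∪ {0}`. -/
def Pe (ε : ℕ → ℤ) : Set Zinf := {J | J ≠ 0 ∧ 0 < ε (nIdx J) * lastCoeff J} ∪ {0}

/-- The reversed lexicographic order `P = {J : j_{n(J)} > 0} ∪ {0}`. -/
def revLexP : Set Zinf := {J | J ≠ 0 ∧ 0 < lastCoeff J} ∪ {0}

/-- `ℤ^n = {J ∈ ℤ^{∞*} : n(J) ≤ n}`. -/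
def Zn (n : ℕ) : Set Zinf := {J | nIdx J ≤ n}

/-- The signum function of an order `Q`. -/
noncomputable def sgnOrder {Γ : Type*} [AddCommGroup Γ] (Q : Set Γ) (x : Γ) : ℝ := by
  classical exact if x = 0 then 0 else if x ∈ Q then 1 else -1

/-- The character `χ_J(θ) = ∏_n e^{i j_n θ_n}` of `𝕋^ℕ` attached to `J ∈ ℤ^{∞*}`. -/
noncomputable def charJ (J : Zinf) (θ : TorusInf) : ℂ :=
  ∏ k ∈ J.support, (fourier (J k) (θ k) : ℂ)

/-! If `J ∈ ℤ^k \ ℤ^{k-1}` has last nonzero coordinate `c`, then `sgn_P J = sign c` and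
`sgn_{P(ε)} J = sign (ε_k c) = ε_k sign c`, so `T_P ∘ T_{P(ε)}` multiplies `χ_J` by
`(-i)² ε_k (sign c)² = -ε_k`. -/

theorem sgnOrder_eq_sign {Γ : Type*} [AddCommGroup Γ] {Q : Set Γ} {f : Γ → ℤ}
    (hf : ∀ x, f x = 0 ↔ x = 0) (hQ : ∀ x, x ≠ 0 → (x ∈ Q ↔ 0 < f x)) (x : Γ) :
    sgnOrder Q x = (f x).sign := by
  classical
  unfold sgnOrder
  by_cases hx : x = 0
  · subst hx
    simp [(hf 0).2 rfl]
  rw [if_neg hx, apply_ite (fun s : ℝ => s), hQ x hx]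
  rcases lt_trichotomy (f x) 0 with h | h | h
  · simp [h.not_gt, Int.sign_eq_neg_one_of_neg h]
  · exact absurd ((hf x).1 h) hx
  · simp [h, Int.sign_eq_one_of_pos h]

theorem nIdx_zero : nIdx 0 = 0 := by
  simp [nIdx]

theorem lastCoeff_eq_zero_iff {J : Zinf} : lastCoeff J = 0 ↔ J = 0 := by
  classical
  refine ⟨fun h => ?_, fun h => by simp [h, lastCoeff]⟩
  by_contra hJ
  have hne : J.support.Nonempty := Finsupp.support_nonempty_iff.mpr hJ
  have hlast : nIdx J - 1 = J.support.max' hne := by simp [nIdx, hne]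
  exact Finsupp.mem_support_iff.mp (J.support.max'_mem hne) (by rwa [lastCoeff, hlast] at h)

theorem sgnOrder_revLexP (J : Zinf) : sgnOrder revLexP J = (lastCoeff J).sign :=
  sgnOrder_eq_sign (fun _ => lastCoeff_eq_zero_iff) (fun J hJ => by simp [revLexP, hJ]) J

theorem sgnOrder_Pe {ε : ℕ → ℤ} (hε : ∀ k, ε k ≠ 0) (J : Zinf) :
    sgnOrder (Pe ε) J = (ε (nIdx J) * lastCoeff J).sign :=
  sgnOrder_eq_sign (f := fun J => ε (nIdx J) * lastCoeff J)
    (fun _ => by simp [hε, lastCoeff_eq_zero_iff]) (fun J hJ => by simp [Pe, hJ]) J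

theorem sgnOrder_revLexP_mul_sgnOrder_Pe {ε : ℕ → ℤ} (hε : ∀ k, ε k = 1 ∨ ε k = -1)
    {J : Zinf} (hJ : J ≠ 0) : sgnOrder revLexP J * sgnOrder (Pe ε) J = ε (nIdx J) := by
  have hε0 : ∀ k, ε k ≠ 0 := fun k => by rcases hε k with h | h <;> simp [h]
  rw [sgnOrder_revLexP, sgnOrder_Pe hε0, Int.sign_mul]
  rcases lt_or_gt_of_ne (mt lastCoeff_eq_zero_iff.1 hJ) with hc | hc <;>
    rcases hε (nIdx J) with h | h <;>
    simp [h, hc, Int.sign_eq_neg_one_of_neg, Int.sign_eq_one_of_pos]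

theorem nIdx_eq_of_mem_Zn_sdiff {k : ℕ} (hk : 1 ≤ k) {J : Zinf} (hJ : J ∈ Zn k \ Zn (k - 1)) :
    nIdx J = k := by
  simp only [Zn, Set.mem_sdiff, Set.mem_ofPred_eq] at hJ
  omega

theorem multiplier_revLexP_mul_Pe_of_mem_Zn_sdiff {ε : ℕ → ℤ} (hε : ∀ k, ε k = 1 ∨ ε k = -1)
    {k : ℕ} (hk : 1 ≤ k) {J : Zinf} (hJ : J ∈ Zn k \ Zn (k - 1)) :
    (-I * (sgnOrder revLexP J : ℂ)) * (-I * (sgnOrder (Pe ε) J : ℂ)) = -(ε k : ℂ) := by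
  have hnJ := nIdx_eq_of_mem_Zn_sdiff hk hJ
  have hJ0 : J ≠ 0 := by
    rintro rfl
    rw [nIdx_zero] at hnJ
    omega
  have hsgn := sgnOrder_revLexP_mul_sgnOrder_Pe hε hJ0
  rw [hnJ] at hsgn
  calc (-I * (sgnOrder revLexP J : ℂ)) * (-I * (sgnOrder (Pe ε) J : ℂ))
      = I ^ 2 * ((sgnOrder revLexP J * sgnOrder (Pe ε) J : ℝ) : ℂ) := by push_cast; ring
    _ = -(ε k : ℂ) := by rw [hsgn, I_sq]; push_cast; ring

theorem sum_multiplier_revLexP_mul_Pe_smul {X : Type*} [AddCommGroup X] [Module ℂ X]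
    (n : ℕ) (K : ℕ → Finset Zinf) (hK : ∀ k ∈ Finset.Icc 1 n, ∀ J ∈ K k, J ∈ Zn k \ Zn (k - 1))
    (a : Zinf → X) {ε : ℕ → ℤ} (hε : ∀ k, ε k = 1 ∨ ε k = -1) (θ : TorusInf) :
    ∑ k ∈ Finset.Icc 1 n, ∑ J ∈ K k,
        ((-I * (sgnOrder revLexP J : ℂ)) * (-I * (sgnOrder (Pe ε) J : ℂ)) * charJ J θ) • a J
      = - ∑ k ∈ Finset.Icc 1 n, (ε k : ℂ) • ∑ J ∈ K k, charJ J θ • a J := by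
  rw [← Finset.sum_neg_distrib]
  refine Finset.sum_congr rfl fun k hk => ?_
  rw [← neg_smul, Finset.smul_sum]
  refine Finset.sum_congr rfl fun J hJ => ?_
  rw [multiplier_revLexP_mul_Pe_of_mem_Zn_sdiff hε (Finset.mem_Icc.1 hk).1 (hK k hk J hJ), smul_smul]

theorem conjugation_composition_eq_martingale_transform_general
    {X : Type*} [NormedAddCommGroup X] [NormedSpace ℂ X]
    (n : ℕ) (K : ℕ → Finset Zinf)
    (hK : ∀ k ∈ Finset.Icc 1 n, ∀ J ∈ K k, J ∈ Zn k \ Zn (k - 1))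
    (a : Zinf → X) (ε : ℕ → ℤ) (hε : ∀ k, ε k = 1 ∨ ε k = -1) :
    (∀ θ : TorusInf,
      ∑ k ∈ Finset.Icc 1 n, ∑ J ∈ K k,
          ((-I * (sgnOrder revLexP J : ℂ)) * (-I * (sgnOrder (Pe ε) J : ℂ)) * charJ J θ) • a J
        = - ∑ k ∈ Finset.Icc 1 n, (ε k : ℂ) • ∑ J ∈ K k, charJ J θ • a J) ∧
    (∀ θ : TorusInf,
      ∑ k ∈ Finset.Icc 1 n, ∑ J ∈ K k,
          ((-I * (sgnOrder revLexP J : ℂ)) *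
            (-I * (sgnOrder (Pe (fun m => -ε m)) J : ℂ)) * charJ J θ) • a J
        = ∑ k ∈ Finset.Icc 1 n, (ε k : ℂ) • ∑ J ∈ K k, charJ J θ • a J) := by
  have hε_neg : ∀ k, -ε k = 1 ∨ -ε k = -1 := fun k => by
    rcases hε k with h | h <;> simp [h]
  refine ⟨sum_multiplier_revLexP_mul_Pe_smul n K hK a hε, fun θ => ?_⟩
  rw [sum_multiplier_revLexP_mul_Pe_smul n K hK a hε_neg θ]
  simp only [Int.cast_neg, neg_smul, Finset.sum_neg_distrib, neg_neg]

/-- For a trigonometric polynomial `f = ∑_{k=1}^n ∑_{J∈K_k} a_J χ_J` with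
`K_k ⊆ ℤ^k \ ℤ^{k−1}`, the composition `T_P ∘ T_{P(ε)}` of the conjugate function
operators for the reversed lexicographic order `P` and for `P(ε)` satisfies
`T_P ∘ T_{P(ε)} f = −∑_{k=1}^n ε_k (∑_{J∈K_k} a_J χ_J)`; equivalently (replacing `ε`
by `−ε`) the composition realizes every martingale transform
`∑_{k=1}^n ε_k (∑_{J∈K_k} a_J χ_J)` of `f`. -/
theorem conjugation_composition_eq_martingale_transform
    {X : Type*} [NormedAddCommGroup X] [NormedSpace ℂ X] [CompleteSpace X]
    (n : ℕ) (hn : 1 ≤ n) (K : ℕ → Finset Zinf)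
    (hK : ∀ k ∈ Finset.Icc 1 n, ∀ J ∈ K k, J ∈ Zn k \ Zn (k - 1))
    (a : Zinf → X) (ε : ℕ → ℤ) (hε : ∀ k, ε k = 1 ∨ ε k = -1) :
    (∀ θ : TorusInf,
      ∑ k ∈ Finset.Icc 1 n, ∑ J ∈ K k,
          ((-I * (sgnOrder revLexP J : ℂ)) * (-I * (sgnOrder (Pe ε) J : ℂ)) * charJ J θ) • a J
        = - ∑ k ∈ Finset.Icc 1 n, (ε k : ℂ) • ∑ J ∈ K k, charJ J θ • a J) ∧
    (∀ θ : TorusInf,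
      ∑ k ∈ Finset.Icc 1 n, ∑ J ∈ K k,
          ((-I * (sgnOrder revLexP J : ℂ)) *
            (-I * (sgnOrder (Pe (fun m => -ε m)) J : ℂ)) * charJ J θ) • a J
        = ∑ k ∈ Finset.Icc 1 n, (ε k : ℂ) • ∑ J ∈ K k, charJ J θ • a J) :=
  conjugation_composition_eq_martingale_transform_general n K hK a ε hε
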